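/- Let x be a q-ary word of length n in which every (ℓ−1)-gram appears at most once. If x' is a q-ary word with the same ℓ-gram profile vector as x, then x' = x. -/

import Mathlib

attribute [local instance] Classical.propDecidable

/-- The ℓ-gram profile vector of `x`. -/
noncomputable def profileVec (q n ℓ : ℕ) (x : Fin n → Fin q) : (Fin ℓ → Fin q) → ℕ :=
  fun z => ((Finset.range (n + 1 - ℓ)).filter
    (fun i => ∀ k : Fin ℓ, ∀ h : i + k.val < n, x ⟨i + k.val, h⟩ = z k)).card

/-!
Every ℓ-gram of `x'` occurs somewhere in `x`. Two consecutive ℓ-grams of `x'`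
overlap in an `(ℓ-1)`-gram, and `(ℓ-1)`-grams occur in `x` at most once, so their occurrences in
`x` are consecutive as well. Hence the ℓ-grams of `x'` occur in `x` at positions `j, j+1, …`, and
since `x` and `x'` have the same length, `j = 0`.
-/

namespace Word

variable {α : Type*} {n ℓ m : ℕ}

def OccursAt (x : Fin n → α) (z : Fin ℓ → α) (i : ℕ) : Prop :=
  i + ℓ ≤ n ∧ ∀ (k : Fin ℓ) (h : i + k < n), x ⟨i + k, h⟩ = z k

def gram (x : Fin n → α) (i : ℕ) (hi : i + ℓ ≤ n) : Fin ℓ → α :=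
  fun k => x ⟨i + k, by omega⟩

theorem occursAt_gram (x : Fin n → α) (i : ℕ) (hi : i + ℓ ≤ n) :
    OccursAt x (gram x i hi) i :=
  ⟨hi, fun _ _ => rfl⟩

theorem OccursAt.init {x : Fin n → α} {z : Fin (m + 1) → α} {i : ℕ} (h : OccursAt x z i) :
    OccursAt x (Fin.init z) i :=
  ⟨by linarith [h.1], fun k hk => h.2 k.castSucc hk⟩

theorem OccursAt.tail {x : Fin n → α} {z : Fin (m + 1) → α} {i : ℕ} (h : OccursAt x z i) :
    OccursAt x (Fin.tail z) (i + 1) := by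
  obtain ⟨hi, hz⟩ := h
  refine ⟨by omega, fun k hk => ?_⟩
  simpa only [Fin.tail, Fin.val_succ, Nat.add_right_comm, Nat.add_assoc] using
    hz k.succ (by simp only [Fin.val_succ]; omega)

theorem tail_gram_eq_init_gram (x : Fin n → α) (i : ℕ) (hi : i + (m + 1) ≤ n)
    (hi' : i + 1 + (m + 1) ≤ n) :
    Fin.tail (gram x i hi) = Fin.init (gram x (i + 1) hi') := by
  funext k
  simp only [Fin.tail, Fin.init, gram, Fin.val_succ, Fin.val_castSucc, Nat.add_right_comm,
    Nat.add_assoc]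

def NoRepeatedGrams (m : ℕ) (x : Fin n → α) : Prop :=
  ∀ (z : Fin m → α) (i j : ℕ), OccursAt x z i → OccursAt x z j → i = j

theorem NoRepeatedGrams.eq_add_one_of_occursAt_gram {x y : Fin n → α}
    (hx : NoRepeatedGrams m x) {i j j' : ℕ} (hi : i + (m + 1) ≤ n)
    (hi' : i + 1 + (m + 1) ≤ n) (hj : OccursAt x (gram y i hi) j)
    (hj' : OccursAt x (gram y (i + 1) hi') j') : j' = j + 1 := by
  refine hx _ _ _ hj'.init ?_
  rw [← tail_gram_eq_init_gram y i hi hi']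
  exact hj.tail

theorem NoRepeatedGrams.occursAt_gram_add {x y : Fin n → α} (hx : NoRepeatedGrams m x)
    (hy : ∀ i (hi : i + (m + 1) ≤ n), ∃ j, OccursAt x (gram y i hi) j) {j : ℕ}
    (h0 : 0 + (m + 1) ≤ n) (hj : OccursAt x (gram y 0 h0) j) (i : ℕ) (hi : i + (m + 1) ≤ n) :
    OccursAt x (gram y i hi) (j + i) := by
  induction i with
  | zero => exact hj
  | succ i ih =>
    obtain ⟨j', hj'⟩ := hy (i + 1) hi
    rwa [hx.eq_add_one_of_occursAt_gram (by omega) hi (ih (by omega)) hj'] at hj'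

theorem eq_of_forall_occursAt_gram_self {x y : Fin n → α} (hℓ : 0 < ℓ) (hℓn : ℓ ≤ n)
    (h : ∀ i (hi : i + ℓ ≤ n), OccursAt x (gram y i hi) i) : y = x := by
  funext ⟨p, hp⟩
  obtain ⟨i, k, hi, hk, rfl⟩ : ∃ i k, i + ℓ ≤ n ∧ k < ℓ ∧ i + k = p :=
    ⟨min p (n - ℓ), p - min p (n - ℓ), by omega, by omega, by omega⟩
  exact ((h i hi).2 ⟨k, hk⟩ hp).symm

theorem NoRepeatedGrams.eq_of_forall_exists_occursAt_gram {x y : Fin n → α}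
    (hx : NoRepeatedGrams m x) (hmn : m + 1 ≤ n)
    (hy : ∀ i (hi : i + (m + 1) ≤ n), ∃ j, OccursAt x (gram y i hi) j) : y = x := by
  obtain ⟨j, hj⟩ := hy 0 (by omega)
  have hshift := hx.occursAt_gram_add hy _ hj
  obtain rfl : j = 0 := by
    have := (hshift (n - (m + 1)) (by omega)).1
    omega
  exact eq_of_forall_occursAt_gram_self (Nat.succ_pos m) hmn fun i hi => by
    simpa only [Nat.zero_add] using hshift i hi

end Word

open Word

theorem mem_profileVec_filter_iff {q n ℓ : ℕ} {x : Fin n → Fin q} {z : Fin ℓ → Fin q} {i : ℕ} :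
    i ∈ (Finset.range (n + 1 - ℓ)).filter
      (fun i => ∀ k : Fin ℓ, ∀ h : i + k.val < n, x ⟨i + k.val, h⟩ = z k) ↔ OccursAt x z i := by
  rw [Finset.mem_filter, Finset.mem_range, OccursAt]
  exact and_congr_left' (by omega)

theorem profileVec_pos_iff {q n ℓ : ℕ} {x : Fin n → Fin q} {z : Fin ℓ → Fin q} :
    0 < profileVec q n ℓ x z ↔ ∃ i, OccursAt x z i := by
  simp only [profileVec, Finset.card_pos, Finset.Nonempty, mem_profileVec_filter_iff]

theorem profileVec_le_one_iff {q n ℓ : ℕ} {x : Fin n → Fin q} :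
    (∀ z, profileVec q n ℓ x z ≤ 1) ↔ NoRepeatedGrams ℓ x := by
  simp only [profileVec, Finset.card_le_one, mem_profileVec_filter_iff]
  exact ⟨fun h z i j hi hj => h z i hi j hj, fun h z i hi j hj => h z i j hi hj⟩

theorem profileVec_zero {q n : ℕ} (x : Fin n → Fin q) (z : Fin 0 → Fin q) :
    profileVec q n 0 x z = n + 1 := by
  simp [profileVec]

theorem stmt_15_general (q n ℓ : ℕ) (hℓn : ℓ ≤ n)
    (x : Fin n → Fin q)
    (hx : ∀ z : Fin (ℓ - 1) → Fin q, profileVec q n (ℓ - 1) x z ≤ 1)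
    (x' : Fin n → Fin q)
    (h : profileVec q n ℓ x' = profileVec q n ℓ x) :
    x' = x := by
  cases ℓ with
  | zero =>
    obtain rfl : n = 0 := by simpa [profileVec_zero] using hx Fin.elim0
    exact Subsingleton.elim _ _
  | succ m =>
    rw [Nat.add_sub_cancel] at hx
    refine (profileVec_le_one_iff.1 hx).eq_of_forall_exists_occursAt_gram hℓn fun i hi => ?_
    rw [← profileVec_pos_iff, ← congrFun h, profileVec_pos_iff]
    exact ⟨i, occursAt_gram x' i hi⟩

/-- Ukkonen: if every `(ℓ−1)`-gram of `x` appears at most once, then `x` is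
uniquely determined by its ℓ-gram profile vector. -/
theorem stmt_15 (q n ℓ : ℕ) (hℓ : 1 ≤ ℓ) (hℓn : ℓ ≤ n)
    (x : Fin n → Fin q)
    (hx : ∀ z : Fin (ℓ - 1) → Fin q, profileVec q n (ℓ - 1) x z ≤ 1)
    (x' : Fin n → Fin q)
    (h : profileVec q n ℓ x' = profileVec q n ℓ x) :
    x' = x :=
  stmt_15_general q n ℓ hℓn x hx x' h
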